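/- A full-rank state cannot be converted into a pure resource state by free operations: let F be a nonempty closed set of density matrices on ℂ^d, let O be a set of quantum channels each of which maps F into F, let ρ be a density matrix of full rank, and let |φ⟩⟨φ| be a pure state with |φ⟩⟨φ| ∉ F. Then it is not the case that for every ε > 0 there exists Λ ∈ O with ⟨φ|Λ(ρ)|φ⟩ > 1 − ε (equivalently, with ‖Λ(ρ) − |φ⟩⟨φ|‖₁ < ε). -/

import Mathlib

open scoped Matrix Kronecker ComplexOrder

noncomputable section

/-- A density matrix: positive semidefinite with unit trace. -/
def IsDensityMatrix {ι : Type*} [Fintype ι] (ρ : Matrix ι ι ℂ) : Prop :=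
  ρ.PosSemidef ∧ ρ.trace = 1

/-- The trace norm `‖M‖₁ = Tr √(M† M)`. -/
noncomputable def traceNorm {ι : Type*} [Fintype ι] [DecidableEq ι]
    (M : Matrix ι ι ℂ) : ℝ :=
  (((Matrix.posSemidef_conjTranspose_mul_self M).isHermitian.eigenvectorUnitary.1 *
      Matrix.diagonal ((fun x : ℝ => (x : ℂ)) ∘ (√·) ∘ (Matrix.posSemidef_conjTranspose_mul_self M).isHermitian.eigenvalues) *
      (star (Matrix.posSemidef_conjTranspose_mul_self M).isHermitian.eigenvectorUnitary :
        Matrix ι ι ℂ)).trace).re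

/-- The amplification `Λ ⊗ id_k` of a linear map on matrices. -/
def amplify {ι : Type*} [Fintype ι] [DecidableEq ι]
    (Λ : Matrix ι ι ℂ →ₗ[ℂ] Matrix ι ι ℂ) (k : ℕ)
    (M : Matrix (ι × Fin k) (ι × Fin k) ℂ) : Matrix (ι × Fin k) (ι × Fin k) ℂ :=
  Matrix.of fun p q => Λ (Matrix.of fun i j => M (i, p.2) (j, q.2)) p.1 q.1

/-- A linear map on matrices is CPTP (a quantum channel) if all its amplifications
preserve positive semidefiniteness and it preserves the trace. -/
def IsCPTP {ι : Type*} [Fintype ι] [DecidableEq ι]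
    (Λ : Matrix ι ι ℂ →ₗ[ℂ] Matrix ι ι ℂ) : Prop :=
  (∀ (k : ℕ) (M : Matrix (ι × Fin k) (ι × Fin k) ℂ),
      M.PosSemidef → (amplify Λ k M).PosSemidef) ∧
  (∀ M, (Λ M).trace = M.trace)

/-- A quantum channel on a `d`-dimensional system. -/
structure QChannel (d : ℕ) where
  toFun : Matrix (Fin d) (Fin d) ℂ →ₗ[ℂ] Matrix (Fin d) (Fin d) ℂ
  cptp : IsCPTP toFun

/-- A resource theory: a convex compact set `F` of free states and a set `O` of free
operations containing the identity, closed under composition, preserving `F`, and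
containing the state-preparation channel `ρ ↦ Tr(ρ)σ` for every free `σ`. -/
structure ResourceTheory (d : ℕ) where
  F : Set (Matrix (Fin d) (Fin d) ℂ)
  O : Set (QChannel d)
  F_density : ∀ σ ∈ F, IsDensityMatrix σ
  F_convex : Convex ℝ F
  F_compact : IsCompact F
  id_mem : ∃ Λ ∈ O, ∀ ρ, Λ.toFun ρ = ρ
  comp_mem : ∀ Λ₁ ∈ O, ∀ Λ₂ ∈ O, ∃ Λ ∈ O, ∀ ρ, Λ.toFun ρ = Λ₂.toFun (Λ₁.toFun ρ)
  free_mapsto : ∀ Λ ∈ O, ∀ σ ∈ F, Λ.toFun σ ∈ F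
  prep_mem : ∀ σ ∈ F, ∃ Λ ∈ O, ∀ ρ : Matrix (Fin d) (Fin d) ℂ, Λ.toFun ρ = ρ.trace • σ

/-- `ρ → σ`: for every `ε > 0` some free operation maps `ρ` within trace-distance `ε` of `σ`. -/
def Converts {d : ℕ} (RT : ResourceTheory d) (ρ σ : Matrix (Fin d) (Fin d) ℂ) : Prop :=
  ∀ ε > 0, ∃ Λ ∈ RT.O, traceNorm (Λ.toFun ρ - σ) < ε

/-- A resource monotone: nonnegative on states, nonincreasing under free operations,
vanishing on free states. -/
def IsMonotone {d : ℕ} (RT : ResourceTheory d) (R : Matrix (Fin d) (Fin d) ℂ → ℝ) : Prop :=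
  (∀ ρ, IsDensityMatrix ρ → 0 ≤ R ρ) ∧
  (∀ ρ, IsDensityMatrix ρ → ∀ Λ ∈ RT.O, R (Λ.toFun ρ) ≤ R ρ) ∧
  (∀ σ ∈ RT.F, R σ = 0)

/-- The pure state `|ψ⟩⟨ψ|`. -/
def pureState {ι : Type*} (ψ : ι → ℂ) : Matrix ι ι ℂ :=
  Matrix.vecMulVec ψ (star ψ)

/-- `ψ` is a unit vector. -/
def IsUnitVec {ι : Type*} [Fintype ι] (ψ : ι → ℂ) : Prop :=
  ∑ i, Complex.normSq (ψ i) = 1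

/-- Trace-norm distance from `ρ` to a set of states. -/
noncomputable def distToSet {ι : Type*} [Fintype ι] [DecidableEq ι]
    (F : Set (Matrix ι ι ℂ)) (ρ : Matrix ι ι ℂ) : ℝ :=
  sInf ((fun μ => traceNorm (ρ - μ)) '' F)

/-!
Since `ρ` is positive definite, `c • σ₀ ≤ ρ` for a free state `σ₀` and some `c > 0`. A channel `Λ`
is monotone for the Loewner order and trace preserving, so `Λ ρ - c • Λ σ₀` is positive of trace
`1 - c`, whence `c (1 - ⟨φ|Λ σ₀|φ⟩) ≤ 1 - ⟨φ|Λ ρ|φ⟩`. If the fidelity of `Λ ρ` with `|φ⟩⟨φ|` could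
be pushed to `1`, so could that of the free states `Λ σ₀`. But a density matrix `σ` satisfies
`‖σ - |φ⟩⟨φ|‖₂² = Tr σ² + 1 - 2⟨φ|σ|φ⟩ ≤ 2 (1 - ⟨φ|σ|φ⟩)`, so `|φ⟩⟨φ|` would lie in the closure of
`F`, which is `F` itself.
-/

open scoped MatrixOrder Topology
open Matrix Filter

theorem Matrix.PosSemidef.normSq_apply_le {n : Type*} {A : Matrix n n ℂ} (hA : A.PosSemidef)
    (i j : n) : Complex.normSq (A i j) ≤ (A i i).re * (A j j).re := by
  have h := (hA.submatrix ![i, j]).det_nonneg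
  simp only [det_fin_two, Fin.isValue, submatrix_apply, cons_val_zero, cons_val_one,
    sub_nonneg] at h
  have hdiag (k : n) : ((A k k).re : ℂ) = A k k :=
    Complex.conj_eq_iff_re.mp (hA.isHermitian.apply k k)
  rw [← hA.isHermitian.apply j i, ← hdiag i, ← hdiag j, RCLike.star_def, Complex.mul_conj] at h
  exact_mod_cast h

section

variable {n : Type*} [Fintype n] [DecidableEq n]

/-- The `k = 1` amplification of `Λ`, restricted to the indices `(i, 0)`, is `Λ` itself. -/
theorem IsCPTP.map_posSemidef {Λ : Matrix n n ℂ →ₗ[ℂ] Matrix n n ℂ} (hΛ : IsCPTP Λ)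
    {M : Matrix n n ℂ} (hM : M.PosSemidef) : (Λ M).PosSemidef :=
  (hΛ.1 1 (M.submatrix Prod.fst Prod.fst) (hM.submatrix _)).submatrix fun i => (i, 0)

theorem IsCPTP.monotone {Λ : Matrix n n ℂ →ₗ[ℂ] Matrix n n ℂ} (hΛ : IsCPTP Λ) : Monotone Λ :=
  fun A B hAB => le_iff.2 <| by simpa only [map_sub] using hΛ.map_posSemidef (le_iff.1 hAB)

theorem Matrix.PosSemidef.le_algebraMap_re_trace {A : Matrix n n ℂ} (hA : A.PosSemidef) :
    A ≤ algebraMap ℝ (Matrix n n ℂ) A.trace.re := by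
  rw [le_algebraMap_iff_spectrum_le hA.isHermitian.isSelfAdjoint,
    hA.isHermitian.spectrum_real_eq_range_eigenvalues]
  rintro _ ⟨i, rfl⟩
  rw [hA.isHermitian.trace_eq_sum_eigenvalues, Complex.re_sum]
  exact Finset.single_le_sum (fun j _ => hA.eigenvalues_nonneg j) (Finset.mem_univ i)

theorem Matrix.PosDef.exists_pos_algebraMap_le {A : Matrix n n ℂ} (hA : A.PosDef) :
    ∃ c > 0, algebraMap ℝ (Matrix n n ℂ) c ≤ A := by
  cases subsingleton_or_nontrivial (Matrix n n ℂ)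
  · exact ⟨1, one_pos, (Subsingleton.elim _ _).le⟩
  · exact (CFC.exists_pos_algebraMap_le_iff hA.isHermitian.isSelfAdjoint).2
      fun _ hx => hA.isStrictlyPositive.spectrum_pos hx

theorem Matrix.PosDef.exists_pos_smul_le {A B : Matrix n n ℂ} (hA : A.PosDef)
    (hB : IsDensityMatrix B) : ∃ c : ℝ, 0 < c ∧ c • B ≤ A := by
  obtain ⟨c, hc, hcA⟩ := hA.exists_pos_algebraMap_le
  refine ⟨c, hc, le_trans ?_ hcA⟩
  have hB1 := hB.1.le_algebraMap_re_trace
  rw [hB.2, Complex.one_re, map_one] at hB1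
  simpa [Algebra.algebraMap_eq_smul_one] using smul_le_smul_of_nonneg_left hB1 hc.le

end

section

variable {n : Type*} [Fintype n]

def pureFidelity (φ : n → ℂ) (σ : Matrix n n ℂ) : ℝ :=
  (star φ ⬝ᵥ σ *ᵥ φ).re

theorem Matrix.PosSemidef.pureFidelity_le_re_trace {A : Matrix n n ℂ} (hA : A.PosSemidef)
    {φ : n → ℂ} (hφ : IsUnitVec φ) : pureFidelity φ A ≤ A.trace.re := by
  classical
  have h := (le_iff.1 hA.le_algebraMap_re_trace).re_dotProduct_nonneg φ
  have hφφ : star φ ⬝ᵥ φ = 1 := by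
    have hφ' : ∑ i, ‖φ i‖ ^ 2 = (1 : ℝ) := by simp only [Complex.sq_norm]; exact hφ
    simp only [dotProduct, Pi.star_apply, RCLike.star_def, Complex.conj_mul']
    exact_mod_cast hφ'
  rw [Algebra.algebraMap_eq_smul_one, sub_mulVec, dotProduct_sub, smul_mulVec, one_mulVec,
    dotProduct_smul, hφφ] at h
  simpa [pureFidelity] using h

theorem mul_one_sub_pureFidelity_le {A B : Matrix n n ℂ} (hA : A.trace = 1) (hB : B.trace = 1)
    {c : ℝ} (hBA : c • B ≤ A) {φ : n → ℂ} (hφ : IsUnitVec φ) :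
    c * (1 - pureFidelity φ B) ≤ 1 - pureFidelity φ A := by
  have h := (le_iff.1 hBA).pureFidelity_le_re_trace hφ
  rw [trace_sub, trace_smul, hA, hB, pureFidelity, sub_mulVec, dotProduct_sub, smul_mulVec,
    dotProduct_smul] at h
  simp only [Complex.real_smul, Complex.sub_re, Complex.mul_re, Complex.ofReal_re,
    Complex.ofReal_im, zero_mul, sub_zero, mul_one, Complex.one_re, pureFidelity] at h ⊢
  linarith

theorem sum_normSq_sub_pureState_apply (σ : Matrix n n ℂ) (φ : n → ℂ) :
    ∑ k, ∑ l, Complex.normSq (σ k l - pureState φ k l) =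
      ∑ k, ∑ l, Complex.normSq (σ k l) + (∑ k, Complex.normSq (φ k)) ^ 2
        - 2 * pureFidelity φ σ := by
  simp only [Complex.normSq_sub, pureState, vecMulVec_apply, Pi.star_apply, RCLike.star_def,
    Complex.normSq_conj, map_mul, Complex.conj_conj, Finset.sum_add_distrib,
    Finset.sum_sub_distrib, ← Finset.mul_sum, sq, Finset.sum_mul_sum, pureFidelity, dotProduct,
    mulVec, Complex.re_sum]
  congr 2
  refine Finset.sum_congr rfl fun k _ => ?_
  rw [Finset.mul_sum, Complex.re_sum]
  congr 1 with l
  ring_nf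

theorem IsDensityMatrix.sum_normSq_apply_le_one {σ : Matrix n n ℂ} (hσ : IsDensityMatrix σ) :
    ∑ k, ∑ l, Complex.normSq (σ k l) ≤ 1 := by
  have hdiag : ∑ k, (σ k k).re = 1 := by
    simpa [trace] using congrArg Complex.re hσ.2
  calc ∑ k, ∑ l, Complex.normSq (σ k l) ≤ ∑ k, ∑ l, (σ k k).re * (σ l l).re :=
        Finset.sum_le_sum fun k _ => Finset.sum_le_sum fun l _ => hσ.1.normSq_apply_le k l
    _ = 1 := by rw [← Finset.sum_mul_sum, hdiag, one_mul]

theorem normSq_sub_pureState_apply_le {σ : Matrix n n ℂ} (hσ : IsDensityMatrix σ)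
    {φ : n → ℂ} (hφ : IsUnitVec φ) (i j : n) :
    Complex.normSq (σ i j - pureState φ i j) ≤ 2 * (1 - pureFidelity φ σ) := by
  have hnonneg (k l : n) := Complex.normSq_nonneg (σ k l - pureState φ k l)
  calc Complex.normSq (σ i j - pureState φ i j)
      ≤ ∑ l, Complex.normSq (σ i l - pureState φ i l) :=
        Finset.single_le_sum (fun l _ => hnonneg i l) (Finset.mem_univ j)
    _ ≤ ∑ k, ∑ l, Complex.normSq (σ k l - pureState φ k l) :=
        Finset.single_le_sum (f := fun k => ∑ l, _)
          (fun k _ => Finset.sum_nonneg fun l _ => hnonneg k l) (Finset.mem_univ i)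
    _ ≤ 2 * (1 - pureFidelity φ σ) := by
        rw [sum_normSq_sub_pureState_apply, show ∑ k, Complex.normSq (φ k) = 1 from hφ]
        linarith [hσ.sum_normSq_apply_le_one]

theorem tendsto_pureState_of_tendsto_pureFidelity {α : Type*} {l : Filter α}
    {σ : α → Matrix n n ℂ} (hσ : ∀ a, IsDensityMatrix (σ a)) {φ : n → ℂ} (hφ : IsUnitVec φ)
    (h : Tendsto (fun a => pureFidelity φ (σ a)) l (𝓝 1)) :
    Tendsto σ l (𝓝 (pureState φ)) := by
  refine tendsto_pi_nhds.2 fun i => tendsto_pi_nhds.2 fun j => ?_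
  rw [tendsto_iff_norm_sub_tendsto_zero]
  refine squeeze_zero (fun _ => norm_nonneg _)
    (fun a => Real.sqrt_le_sqrt (normSq_sub_pureState_apply_le (hσ a) hφ i j)) ?_
  simpa using ((h.const_sub 1).const_mul 2).sqrt

theorem pureState_mem_closure_of_pureFidelity {S : Set (Matrix n n ℂ)}
    (hS : ∀ σ ∈ S, IsDensityMatrix σ) {φ : n → ℂ} (hφ : IsUnitVec φ)
    (h : ∀ ε > 0, ∃ σ ∈ S, 1 - ε < pureFidelity φ σ) :
    pureState φ ∈ closure S := by
  choose σ hσS hσ using fun k : ℕ => h (1 / (k + 1)) Nat.one_div_pos_of_nat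
  refine mem_closure_of_tendsto (tendsto_pureState_of_tendsto_pureFidelity (l := atTop)
    (fun k => hS _ (hσS k)) hφ ?_) (Eventually.of_forall hσS)
  refine tendsto_of_tendsto_of_tendsto_of_le_of_le ?_ tendsto_const_nhds (fun k => (hσ k).le)
    fun k => by simpa [(hS _ (hσS k)).2] using (hS _ (hσS k)).1.pureFidelity_le_re_trace hφ
  simpa using (tendsto_one_div_add_atTop_nhds_zero_nat (𝕜 := ℝ)).const_sub 1

end

/-- A full-rank state cannot be converted into a pure resource state:
if every channel in `O` maps the closed nonempty set `F` of free states into itself,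
`ρ` has full rank, and the pure state `|φ⟩⟨φ|` is not free, then it is not the case
that for every `ε > 0` some `Λ ∈ O` achieves `⟨φ|Λ(ρ)|φ⟩ > 1 − ε`. -/
theorem full_rank_not_convertible_to_pure {d : ℕ}
    (F : Set (Matrix (Fin d) (Fin d) ℂ)) (hFne : F.Nonempty) (hFclosed : IsClosed F)
    (hFdm : ∀ σ ∈ F, IsDensityMatrix σ)
    (O : Set (QChannel d)) (hO : ∀ Λ ∈ O, ∀ σ ∈ F, Λ.toFun σ ∈ F)
    (ρ : Matrix (Fin d) (Fin d) ℂ) (hρ : IsDensityMatrix ρ) (hfull : ρ.PosDef)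
    (φ : Fin d → ℂ) (hφ : IsUnitVec φ) (hφF : pureState φ ∉ F) :
    ¬ (∀ ε > (0 : ℝ), ∃ Λ ∈ O,
        1 - ε < (star φ ⬝ᵥ (Λ.toFun ρ).mulVec φ).re) := by
  intro h
  obtain ⟨σ₀, hσ₀⟩ := hFne
  obtain ⟨c, hc, hcσ₀⟩ := hfull.exists_pos_smul_le (hFdm σ₀ hσ₀)
  refine hφF <| hFclosed.closure_subset <|
    pureState_mem_closure_of_pureFidelity hFdm hφ fun ε hε => ?_
  obtain ⟨Λ, hΛ, hΛρ⟩ := h (c * ε) (by positivity)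
  refine ⟨Λ.toFun σ₀, hO Λ hΛ σ₀ hσ₀, ?_⟩
  have hle : c • Λ.toFun σ₀ ≤ Λ.toFun ρ := by
    rw [← LinearMap.map_smul_of_tower]
    exact Λ.cptp.monotone hcσ₀
  have hfid := mul_one_sub_pureFidelity_le ((Λ.cptp.2 ρ).trans hρ.2)
    ((Λ.cptp.2 σ₀).trans (hFdm σ₀ hσ₀).2) hle hφ
  have hρε : 1 - pureFidelity φ (Λ.toFun ρ) < c * ε := by rw [pureFidelity]; linarith
  linarith [lt_of_mul_lt_mul_left (hfid.trans_lt hρε) hc.le]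
end
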